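/- Bounded distortion of the projective action on S¹. Let ψ ∈ SO⁰(2,1), let s = d(O, ψ(O)) be the hyperbolic distance that ψ moves the point O ∈ H², and set K = e^s π/2. Then for all a₁, a₂ ∈ S¹, K⁻¹ ρ(a₁, a₂) ≤ ρ(P(ψ)(a₁), P(ψ)(a₂)) ≤ K ρ(a₁, a₂). -/
import Mathlib


noncomputable section

open Set

/-- The underlying vector space ℝ^{2,1} of Minkowski (2+1)-space `E`. -/
abbrev V : Type := Fin 3 → ℝ

/-- The Lorentzian inner product `B` of signature (2,1). -/
def mB (u v : V) : ℝ := u 0 * v 0 + u 1 * v 1 - u 2 * v 2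

def Timelike (v : V) : Prop := mB v v < 0

def UnitSpacelike (v : V) : Prop := mB v v = 1

/-- future-pointing timelike vector. -/
def FutureTimelike (v : V) : Prop := mB v v < 0 ∧ 0 < v 2

/-- The standard Euclidean norm on ℝ³. -/
def eunorm (v : V) : ℝ := Real.sqrt (v 0 ^ 2 + v 1 ^ 2 + v 2 ^ 2)

/-- The Euclidean distance ρ. -/
def ρ (p q : V) : ℝ := eunorm (p - q)

/-- Open Euclidean ball `B(x,δ)`. -/
def eball (x : V) (δ : ℝ) : Set V := {y | ρ x y < δ}

/-- Euclidean δ-neighborhood `B(S,δ)` of a set `S`. -/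
def nbhd (S : Set V) (δ : ℝ) : Set V := {y | ∃ x ∈ S, ρ x y < δ}

/-- Membership in SO⁰(2,1): a linear isometry of `B` preserving orientation
(det = 1) and time-orientation (the future cone); this characterizes the
identity component of the group of linear isometries of `B`. -/
def InSO (g : V ≃ₗ[ℝ] V) : Prop :=
  (∀ u v : V, mB (g u) (g v) = mB u v) ∧
  LinearMap.det g.toLinearMap = 1 ∧
  ∀ v : V, FutureTimelike v → FutureTimelike (g v)

/-- Membership in Isom⁰(E) = SO⁰(2,1) ⋉ ℝ³. -/
def InIsom (φ : V ≃ᵃ[ℝ] V) : Prop := InSO φ.linear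

/-- The point `u_φ = (cos φ, sin φ, 1)` on the circle S¹ of future-pointing null vectors. -/
def uph (φ : ℝ) : V := ![Real.cos φ, Real.sin φ, 1]

/-- The circle S¹ of future-pointing null vectors. -/
def circ : Set V := {u | ∃ φ : ℝ, u = uph φ}

/-- An interval (arc) `{u_φ : φ₁ < φ < φ₂}` on S¹. -/
def arc (φ₁ φ₂ : ℝ) : Set V := {u | ∃ φ : ℝ, φ₁ < φ ∧ φ < φ₂ ∧ u = uph φ}

/-- Radial projection of a future-pointing null vector back onto S¹ (divide by third
coordinate); `u ↦ nproj (g u)` is the induced action `P(g)` of `g` on S¹. -/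
def nproj (w : V) : V := (w 2)⁻¹ • w

/-- `(a,b,c)` is a positively oriented basis of ℝ³. -/
def PosOriented (a b c : V) : Prop := 0 < Matrix.det (Matrix.of ![a, b, c])

/-- `xm = x⁻(v)`, `xp = x⁺(v)`: the two points of S¹ which are B-orthogonal to the
unit-spacelike vector `v`, labeled so that `(x⁻(v), x⁺(v), v)` is positively oriented. -/
def IsNullFrame (v xm xp : V) : Prop :=
  xm ∈ circ ∧ xp ∈ circ ∧ mB xm v = 0 ∧ mB xp v = 0 ∧ xm ≠ xp ∧ PosOriented xm xp v

/-- Eigendata of a hyperbolic element of SO⁰(2,1): `xm = x⁻(g)` and `xp = x⁺(g)` are the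
eigenvectors on S¹ with eigenvalues `lam < 1 < lam⁻¹`. -/
def IsHypData (g : V ≃ₗ[ℝ] V) (lam : ℝ) (xm xp : V) : Prop :=
  0 < lam ∧ lam < 1 ∧ xm ∈ circ ∧ xp ∈ circ ∧ g xm = lam • xm ∧ g xp = lam⁻¹ • xp

/-- `g` is hyperbolic: it has eigenvalues `lam < 1 < lam⁻¹` with null eigenvectors on S¹. -/
def IsHyperbolic (g : V ≃ₗ[ℝ] V) : Prop := ∃ lam xm xp, IsHypData g lam xm xp

/-- `g` is ε-hyperbolic: it is hyperbolic and `ρ(x⁺(g), x⁻(g)) ≥ ε`. -/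
def EpsHyperbolic (g : V ≃ₗ[ℝ] V) (ε : ℝ) : Prop :=
  ∃ lam xm xp, IsHypData g lam xm xp ∧ ε ≤ ρ xp xm

/-- Hyperbolic 2-space H² (hyperboloid model: the set of future unit timelike vectors,
the canonical section of the set of timelike lines). -/
def Hyp : Set V := {v | mB v v = -1 ∧ 0 < v 2}

/-- The origin `O ∈ H²`. -/
def Opt : V := ![0, 0, 1]

/-- Hyperbolic distance on H² (arcosh of |B(x,y)| for normalized x, y). -/
def hdist (x y : V) : ℝ := Real.log (|mB x y| + Real.sqrt (mB x y ^ 2 - 1))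

/-- The half-plane `H_v ⊂ H²` determined by a unit-spacelike vector `v`. -/
def halfPlane (v : V) : Set V := {u | u ∈ Hyp ∧ 0 < mB u v}

/-- The geodesic `l_v ⊂ H²` determined by a unit-spacelike vector `v`. -/
def geo (v : V) : Set V := {u | u ∈ Hyp ∧ mB u v = 0}

/-- The crooked plane `C₀` with vertex the origin directed by `e₁ = (1,0,0)`. -/
def C0 : Set V :=
  {u | u 0 = 0 ∧ |u 1| ≤ |u 2|} ∪
  {u | u 0 ≤ 0 ∧ u 1 = u 2} ∪
  {u | 0 ≤ u 0 ∧ u 1 = -u 2}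

/-- The open crooked half-space `H₀` bounded by `C₀`. -/
def H0 : Set V :=
  {u | 0 < u 0 ∧ 0 < u 1 + u 2} ∪
  {u | u 0 = 0 ∧ 0 < u 1 + u 2 ∧ 0 < u 2 - u 1} ∪
  {u | u 0 < 0 ∧ 0 < u 2 - u 1}

/-- `S` is a crooked plane `C(u,p) = p + g(C₀)` for some `g ∈ SO⁰(2,1)`. -/
def IsCrookedPlane (S : Set V) : Prop :=
  ∃ (g : V ≃ₗ[ℝ] V) (p : V), InSO g ∧ S = (fun x => p + g x) '' C0

/-- `H` is a crooked half-space `H(u,p) = p + g(H₀)` for some `g ∈ SO⁰(2,1)`. -/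
def IsCrookedHalfSpace (H : Set V) : Prop :=
  ∃ (g : V ≃ₗ[ℝ] V) (p : V), InSO g ∧ H = (fun x => p + g x) '' H0

/-- Signed generator: `g^+ = g`, `g^- = g⁻¹` (Bool `true` = `+`, `false` = `−`). -/
def sgen {G : Type*} [Group G] (g : G) (j : Bool) : G := if j then g else g⁻¹

/-- A word `w 0, …, w l` in the letters `(i,j)` (meaning `h_i^j`) is reduced:
`(i_{k+1}, j_{k+1}) ≠ (i_k, −j_k)` for all `k < l`. -/
def ReducedWord {m : ℕ} (l : ℕ) (w : ℕ → Fin m × Bool) : Prop :=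
  ∀ k, k < l → ¬((w (k + 1)).1 = (w k).1 ∧ (w (k + 1)).2 = !(w k).2)

/-- An affine Schottky configuration. -/
structure AffSchottky (m : ℕ) where
  hm : 2 ≤ m
  h : Fin m → V ≃ᵃ[ℝ] V
  hIsom : ∀ i, InIsom (h i)
  H : Fin m → Bool → Set V
  hCrooked : ∀ i j, IsCrookedHalfSpace (H i j)
  hDisj : ∀ i j i' j', (i, j) ≠ (i', j') → Disjoint (H i j) (H i' j')
  hPair : ∀ i, ⇑(h i) '' H i false = (closure (H i true))ᶜ

namespace AffSchottky

variable {m : ℕ} (S : AffSchottky m)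

/-- The crooked polyhedron `X = E − ⋃ closure(H_i^j)`. -/
def X : Set V := (⋃ i, ⋃ j, closure (S.H i j))ᶜ

/-- The affine Schottky group Γ generated by `h₁, …, h_m`. -/
def Γ : Subgroup (V ≃ᵃ[ℝ] V) := Subgroup.closure (Set.range S.h)

/-- The signed generators `h_i^j`. -/
def hp (i : Fin m) (j : Bool) : V ≃ᵃ[ℝ] V := sgen (S.h i) j

/-- `wprod w k = h_{i₀}^{j₀} ⋯ h_{i_{k-1}}^{j_{k-1}}` where `w t = (i_t, j_t)`. -/
def wprod (w : ℕ → Fin m × Bool) (k : ℕ) : V ≃ᵃ[ℝ] V :=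
  ((List.range k).map fun t => S.hp (w t).1 (w t).2).prod

end AffSchottky

/-- A (linear) Schottky configuration. -/
structure LinSchottky (m : ℕ) where
  hm : 2 ≤ m
  g : Fin m → V ≃ₗ[ℝ] V
  hSO : ∀ i, InSO (g i)
  a : Fin m → Bool → ℝ
  b : Fin m → Bool → ℝ
  hab : ∀ i j, a i j < b i j ∧ b i j - a i j < 2 * Real.pi
  hDisjCl : ∀ i j i' j', (i, j) ≠ (i', j') →
    Disjoint (closure (arc (a i j) (b i j))) (closure (arc (a i' j') (b i' j')))
  hPair : ∀ i, (fun u => nproj (g i u)) '' arc (a i false) (b i false) =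
    circ \ closure (arc (a i true) (b i true))
  hPairInv : ∀ i, (fun u => nproj ((g i)⁻¹ u)) '' arc (a i true) (b i true) =
    circ \ closure (arc (a i false) (b i false))

namespace LinSchottky

variable {m : ℕ} (S : LinSchottky m)

/-- The intervals `A_i^j ⊂ S¹`. -/
def A (i : Fin m) (j : Bool) : Set V := arc (S.a i j) (S.b i j)

/-- The Schottky group `G` generated by `g₁, …, g_m`. -/
def G : Subgroup (V ≃ₗ[ℝ] V) := Subgroup.closure (Set.range S.g)

/-- The signed generators `g_i^j`. -/
def gp (i : Fin m) (j : Bool) : V ≃ₗ[ℝ] V := sgen (S.g i) j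

/-- `wprod w k = g_{i₀}^{j₀} ⋯ g_{i_{k-1}}^{j_{k-1}}` where `w t = (i_t, j_t)`. -/
def wprod (w : ℕ → Fin m × Bool) (k : ℕ) : V ≃ₗ[ℝ] V :=
  ((List.range k).map fun t => S.gp (w t).1 (w t).2).prod

end LinSchottky

/-- Given directing unit-spacelike vectors `v i j` of the half-planes `H_i^j`, the
fundamental polygon `Δ = H² − ⋃ closure(H_i^j)` (closures taken in H²). -/
def linΔ {m : ℕ} (v : Fin m → Bool → V) : Set V :=
  Hyp \ ⋃ i, ⋃ j, Hyp ∩ closure (halfPlane (v i j))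

lemma rho_sq (u w : V) : ρ u w ^ 2 = (u 0 - w 0)^2 + (u 1 - w 1)^2 + (u 2 - w 2)^2 := by
  show Real.sqrt ((u-w) 0 ^2 + (u-w) 1 ^2 + (u-w) 2 ^2) ^ 2 = _
  rw [Real.sq_sqrt (by positivity)]; rfl

lemma rho_nonneg (u w : V) : 0 ≤ ρ u w := Real.sqrt_nonneg _

lemma rho_sq_null (u w : V) (hu : mB u u = 0) (hw : mB w w = 0)
    (hu2 : u 2 = 1) (hw2 : w 2 = 1) : ρ u w ^ 2 = -2 * mB u w := by
  rw [rho_sq]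
  unfold mB at hu hw ⊢
  linear_combination hu + hw + (2*(u 2 - w 2))*hu2 - (2*(u 2 - w 2))*hw2

lemma mB_smul_smul (c d : ℝ) (u v : V) : mB (c • u) (d • v) = c * d * mB u v := by
  show c * u 0 * (d * v 0) + c * u 1 * (d * v 1) - c * u 2 * (d * v 2) = _
  unfold mB; ring

lemma mB_uph_self (φ : ℝ) : mB (uph φ) (uph φ) = 0 := by
  show Real.cos φ * Real.cos φ + Real.sin φ * Real.sin φ - 1 * 1 = 0
  nlinarith [Real.sin_sq_add_cos_sq φ]

lemma mB_Opt (w : V) : mB Opt w = -(w 2) := by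
  show 0 * w 0 + 0 * w 1 - 1 * w 2 = _; ring

lemma mB_Opt' (w : V) : mB w Opt = -(w 2) := by
  show w 0 * 0 + w 1 * 0 - w 2 * 1 = _; ring

lemma pi_half_sq : (1:ℝ) ≤ (Real.pi/2)^2 := by nlinarith [Real.pi_gt_three]

lemma le_of_sq_le (a b : ℝ) (ha : 0 ≤ a) (hb : 0 ≤ b) (h : a^2 ≤ b^2) : a ≤ b := by
  nlinarith

set_option maxHeartbeats 1000000 in
/-- bounded distortion of the projective action on S¹: with `s = d(O, ψ(O))`
and `K = e^s π/2`, `K⁻¹ ρ(a₁,a₂) ≤ ρ(P(ψ)a₁, P(ψ)a₂) ≤ K ρ(a₁,a₂)` for all `a₁, a₂ ∈ S¹`. -/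
theorem stmt15 (ψ : V ≃ₗ[ℝ] V) (hψ : InSO ψ) (a₁ a₂ : V)
    (h₁ : a₁ ∈ circ) (h₂ : a₂ ∈ circ) :
    (Real.exp (hdist Opt (ψ Opt)) * Real.pi / 2)⁻¹ * ρ a₁ a₂ ≤
        ρ (nproj (ψ a₁)) (nproj (ψ a₂)) ∧
      ρ (nproj (ψ a₁)) (nproj (ψ a₂)) ≤
        (Real.exp (hdist Opt (ψ Opt)) * Real.pi / 2) * ρ a₁ a₂ := by
  obtain ⟨Binv, -, hfut⟩ := hψ
  obtain ⟨φ₁, rfl⟩ := h₁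
  obtain ⟨φ₂, rfl⟩ := h₂
  set p : V := ψ.symm Opt with hpdef
  have hψp : ψ p = Opt := ψ.apply_symm_apply Opt
  have hpp : mB p p = -1 := by
    rw [← Binv p p, hψp]; show (0:ℝ) * 0 + 0 * 0 - 1 * 1 = -1; ring
  have hp2 : 0 < p 2 := by
    rcases lt_trichotomy (p 2) 0 with h | h | h
    · exfalso
      have hn : FutureTimelike (-p) := by
        refine ⟨?_, by simpa using neg_pos.mpr h⟩
        have e : mB (-p) (-p) = mB p p := by unfold mB; simp only [Pi.neg_apply]; ring
        rw [e, hpp]; norm_num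
      have h2 := (hfut _ hn).2
      rw [map_neg, hψp] at h2
      have : (-Opt) 2 = -1 := rfl
      rw [this] at h2; linarith
    · exfalso
      have e : mB p p = p 0 * p 0 + p 1 * p 1 := by unfold mB; rw [h]; ring
      nlinarith [hpp, mul_self_nonneg (p 0), mul_self_nonneg (p 1)]
    · exact h
  have hcoord : p 0 ^ 2 + p 1 ^ 2 = p 2 ^ 2 - 1 := by
    have h := hpp; unfold mB at h; linear_combination h
  have ht1 : 1 ≤ p 2 := by nlinarith
  set r : ℝ := Real.sqrt (p 2 ^ 2 - 1) with hrdef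
  have hr0 : 0 ≤ r := Real.sqrt_nonneg _
  have hr2 : r ^ 2 = p 2 ^ 2 - 1 := Real.sq_sqrt (by nlinarith)
  have htr1 : (p 2 - r) * (p 2 + r) = 1 := by nlinarith
  have htrpos : 0 < p 2 - r := by nlinarith
  -- exp of hdist
  have hψO2 : (ψ Opt) 2 = p 2 := by
    have h := Binv Opt p
    rw [hψp, mB_Opt, mB_Opt'] at h
    linarith
  have hmOO : mB Opt (ψ Opt) = -(p 2) := by rw [mB_Opt, hψO2]
  have hexp : Real.exp (hdist Opt (ψ Opt)) = p 2 + r := by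
    unfold hdist
    rw [hmOO, abs_neg, abs_of_pos hp2, neg_sq, ← hrdef]
    exact Real.exp_log (by nlinarith)
  -- projected coordinates
  have key : ∀ φ, (ψ (uph φ)) 2 = -(mB p (uph φ)) := by
    intro φ
    have h := Binv p (uph φ)
    rw [hψp, mB_Opt] at h
    linarith
  have bound : ∀ φ, p 2 - r ≤ (ψ (uph φ)) 2 ∧ (ψ (uph φ)) 2 ≤ p 2 + r := by
    intro φ
    rw [key φ]
    have e : mB p (uph φ) = p 0 * Real.cos φ + p 1 * Real.sin φ - p 2 := by
      show p 0 * Real.cos φ + p 1 * Real.sin φ - p 2 * 1 = _; ring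
    have hcs : (p 0 * Real.cos φ + p 1 * Real.sin φ)^2 ≤ r^2 := by
      nlinarith [Real.sin_sq_add_cos_sq φ, sq_nonneg (p 0 * Real.sin φ - p 1 * Real.cos φ)]
    constructor <;> nlinarith
  set t₁ : ℝ := (ψ (uph φ₁)) 2 with ht₁def
  set t₂ : ℝ := (ψ (uph φ₂)) 2 with ht₂def
  have ht₁ : p 2 - r ≤ t₁ ∧ t₁ ≤ p 2 + r := bound φ₁
  have ht₂ : p 2 - r ≤ t₂ ∧ t₂ ≤ p 2 + r := bound φ₂
  have ht₁pos : 0 < t₁ := lt_of_lt_of_le htrpos ht₁.1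
  have ht₂pos : 0 < t₂ := lt_of_lt_of_le htrpos ht₂.1
  -- the projected points
  have hb₁2 : nproj (ψ (uph φ₁)) 2 = 1 := by
    show t₁⁻¹ * t₁ = 1; exact inv_mul_cancel₀ ht₁pos.ne'
  have hb₂2 : nproj (ψ (uph φ₂)) 2 = 1 := by
    show t₂⁻¹ * t₂ = 1; exact inv_mul_cancel₀ ht₂pos.ne'
  have hbnull : ∀ φ, mB (nproj (ψ (uph φ))) (nproj (ψ (uph φ))) = 0 := by
    intro φ
    show mB (((ψ (uph φ)) 2)⁻¹ • _) (((ψ (uph φ)) 2)⁻¹ • _) = 0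
    rw [mB_smul_smul, Binv, mB_uph_self, mul_zero]
  have hbmB : mB (nproj (ψ (uph φ₁))) (nproj (ψ (uph φ₂))) = t₁⁻¹ * t₂⁻¹ * mB (uph φ₁) (uph φ₂) := by
    show mB (t₁⁻¹ • _) (t₂⁻¹ • _) = _
    rw [mB_smul_smul, Binv]
  -- squared distances
  have ha : ρ (uph φ₁) (uph φ₂) ^ 2 = -2 * mB (uph φ₁) (uph φ₂) := by
    apply rho_sq_null _ _ (mB_uph_self φ₁) (mB_uph_self φ₂) rfl rfl
  have hb : ρ (nproj (ψ (uph φ₁))) (nproj (ψ (uph φ₂))) ^ 2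
      = -2 * (t₁⁻¹ * t₂⁻¹ * mB (uph φ₁) (uph φ₂)) := by
    rw [← hbmB]
    exact rho_sq_null _ _ (hbnull φ₁) (hbnull φ₂) hb₁2 hb₂2
  set d : ℝ := ρ (uph φ₁) (uph φ₂) with hddef
  set D : ℝ := ρ (nproj (ψ (uph φ₁))) (nproj (ψ (uph φ₂))) with hDdef
  have hd0 : 0 ≤ d := rho_nonneg _ _
  have hD0 : 0 ≤ D := rho_nonneg _ _
  have hDq : D ^ 2 * (t₁ * t₂) = d ^ 2 := by
    rw [hDdef, hddef, hb, ha]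
    field_simp
  clear_value t₁ t₂ d D
  set K : ℝ := Real.exp (hdist Opt (ψ Opt)) * Real.pi / 2 with hKdef
  have hKval : K = (p 2 + r) * Real.pi / 2 := by rw [hKdef, hexp]
  have hπ : 3 < Real.pi := Real.pi_gt_three
  have hKpos : 0 < K := by
    rw [hKval]
    exact div_pos (mul_pos (by linarith) Real.pi_pos) two_pos
  have hq1 : (p 2 - r)^2 ≤ t₁ * t₂ := by
    rw [sq]; exact mul_le_mul ht₁.1 ht₂.1 htrpos.le (htrpos.le.trans ht₁.1)
  have hq2 : t₁ * t₂ ≤ (p 2 + r)^2 := by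
    rw [sq]; exact mul_le_mul ht₁.2 ht₂.2 ht₂pos.le (by linarith)
  have hqpos : 0 < t₁ * t₂ := mul_pos ht₁pos ht₂pos
  have hKtr : K^2 * (p 2 - r)^2 = (Real.pi / 2)^2 := by
    rw [hKval]
    linear_combination (Real.pi^2/4 * ((p 2 - r)*(p 2 + r) + 1)) * htr1
  constructor
  · -- lower bound
    have hq3 : t₁ * t₂ ≤ K^2 := by
      rw [hKval]
      calc t₁ * t₂ ≤ (p 2 + r)^2 := hq2
        _ = (p 2 + r)^2 * 1 := (mul_one _).symm
        _ ≤ (p 2 + r)^2 * ((Real.pi/2)^2) :=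
            mul_le_mul_of_nonneg_left pi_half_sq (sq_nonneg _)
        _ = ((p 2 + r) * Real.pi / 2)^2 := by ring
    have e : (K⁻¹)^2 * K^2 = 1 := by field_simp
    apply le_of_sq_le _ _ (mul_nonneg (inv_nonneg.mpr hKpos.le) hd0) hD0
    rw [mul_pow]
    calc (K⁻¹)^2 * d^2 = (K⁻¹)^2 * D^2 * (t₁ * t₂) := by rw [← hDq]; ring
      _ ≤ (K⁻¹)^2 * D^2 * K^2 :=
          mul_le_mul_of_nonneg_left hq3 (by positivity)
      _ = D^2 * ((K⁻¹)^2 * K^2) := by ring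
      _ = D^2 := by rw [e, mul_one]
  · -- upper bound
    have h1 : 1 ≤ K^2 * (t₁ * t₂) := by
      have h2 : K^2 * (p 2 - r)^2 ≤ K^2 * (t₁ * t₂) :=
        mul_le_mul_of_nonneg_left hq1 (sq_nonneg K)
      rw [hKtr] at h2
      linarith [pi_half_sq]
    apply le_of_sq_le _ _ hD0 (mul_nonneg hKpos.le hd0)
    rw [mul_pow]
    calc D^2 = D^2 * 1 := (mul_one _).symm
      _ ≤ D^2 * (K^2 * (t₁ * t₂)) := mul_le_mul_of_nonneg_left h1 (sq_nonneg D)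
      _ = K^2 * (D^2 * (t₁ * t₂)) := by ring
      _ = K^2 * d^2 := by rw [hDq]
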